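/- arXiv:1507.07038 — 2 statements merged into one kernel-verified Lean document; each statement's English description precedes it below -/
import Mathlib

section
/- The suffixes of any string are totally V-ordered by increasing length: for any string x = x[1..n] over Σ and any indices 1 ≤ i < j ≤ n, the suffix x[j..n] satisfies x[j..n] ≺ x[i..n] in V-order; in particular x[n] ≺ x[n−1..n] ≺ ⋯ ≺ x. -/
/-! Write the longer suffix as `w ++ u`. Each string on its star path is `P ++ u^{c*}` with `P`
on the star path of `w`, since star deletes either inside `P` or inside the `u`-part. If
`u^{(c-1)*}` is non-decreasing, the deletion that produced `u^{c*}` fell in the `u`-part only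
because the last letter of `P` exceeded the head of `u^{(c-1)*}`, and later stars on `P` only
raise that last letter. Hence no such string with `P ≠ ε` lies on the star path of `u`: there,
`|P|` stars would delete exactly the prefix `P`, which forces the last letter of `P` to be at
most that head. So the two paths first meet right after the step `b :: u^{c*} → u^{c*}` that
deletes the last letter `b` of `w`. As `u^{c*}` is also the star of `u^{(c-1)*}`, the last
position where `u^{(c-1)*}` and `b :: u^{c*}` differ is the one star deletes in `u^{(c-1)*}`,
and there `u^{(c-1)*}` has the smaller letter. -/

variable {α : Type*} [LinearOrder α]

/-- The star operation on strings: delete the letter `x_h`, where `h` is the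
start of the longest non-decreasing suffix (so `h = 1` iff the whole string is
non-decreasing, and otherwise `x_{h-1} > x_h ≤ x_{h+1} ≤ ⋯ ≤ x_n`). -/
def vstar : List α → List α
  | [] => []
  | a :: t => if List.IsChain (· ≤ ·) (a :: t) then t else a :: vstar t

/-- V-order `≺` between distinct strings `x`, `y`: either `x` lies on the path
`y, y*, y^{2*}, …, ε`, or (if neither lies on the path of the other) taking the
least `s, t` with `x^{(s+1)*} = y^{(t+1)*}` and the greatest position `j` at
which `s = x^{s*}` and `t = y^{t*}` differ, the letter of `x^{s*}` at `j` is
smaller than that of `y^{t*}`. -/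
def VLess (x y : List α) : Prop :=
  (∃ k : ℕ, 0 < k ∧ vstar^[k] y = x) ∨
  ((¬ ∃ k : ℕ, vstar^[k] y = x) ∧ (¬ ∃ k : ℕ, vstar^[k] x = y) ∧
    ∃ s t : ℕ,
      vstar^[s + 1] x = vstar^[t + 1] y ∧
      (∀ s' t' : ℕ, vstar^[s' + 1] x = vstar^[t' + 1] y → s ≤ s' ∧ t ≤ t') ∧
      ∃ j : ℕ, j < (vstar^[s] x).length ∧
        (∀ j' : ℕ, j < j' → (vstar^[s] x)[j']? = (vstar^[t] y)[j']?) ∧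
        ∃ a b : α, (vstar^[s] x)[j]? = some a ∧ (vstar^[t] y)[j]? = some b ∧
          a < b)

theorem vstar_of_isChain {l : List α} (h : List.IsChain (· ≤ ·) l) : vstar l = l.tail := by
  cases l with
  | nil => rfl
  | cons a t => simp [vstar, h]

theorem vstar_cons_of_not_isChain {a : α} {t : List α} (h : ¬ List.IsChain (· ≤ ·) (a :: t)) :
    vstar (a :: t) = a :: vstar t := by
  simp [vstar, h]

theorem lt_of_not_isChain_cons_cons {a b : α} {l : List α}
    (h : ¬ List.IsChain (· ≤ ·) (a :: b :: l)) (hl : List.IsChain (· ≤ ·) (b :: l)) : b < a :=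
  lt_of_not_ge fun hab => h (hl.cons_cons hab)

theorem length_vstar (l : List α) : (vstar l).length = l.length - 1 := by
  induction l with
  | nil => rfl
  | cons a t ih =>
    by_cases h : List.IsChain (· ≤ ·) (a :: t)
    · simp [vstar_of_isChain h]
    · cases t with
      | nil => exact absurd (List.isChain_singleton a) h
      | cons b r => simp [vstar_cons_of_not_isChain h, ih]

theorem length_vstar_iterate (k : ℕ) (l : List α) : (vstar^[k] l).length = l.length - k := by
  induction k with
  | zero => rfl
  | succ k ih => rw [Function.iterate_succ_apply', length_vstar, ih, Nat.sub_sub]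

theorem vstar_iterate_length (l : List α) : vstar^[l.length] l = [] :=
  List.eq_nil_of_length_eq_zero (by rw [length_vstar_iterate, Nat.sub_self])

theorem vstar_iterate_of_isChain {l : List α} (h : List.IsChain (· ≤ ·) l) (k : ℕ) :
    vstar^[k] l = l.drop k := by
  induction k with
  | zero => rfl
  | succ k ih => rw [Function.iterate_succ_apply', ih, vstar_of_isChain (h.drop k), List.tail_drop]

theorem vstar_append_cons {Q R : List α} {r : α} (hR : List.IsChain (· ≤ ·) (r :: R))
    (hQ : ∀ x ∈ Q.getLast?, r < x) : vstar (Q ++ r :: R) = Q ++ R := by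
  induction Q with
  | nil => exact vstar_of_isChain hR
  | cons q Q ih =>
    have hnot : ¬ List.IsChain (· ≤ ·) (q :: (Q ++ r :: R)) := by
      rw [← List.cons_append, List.isChain_append]
      rintro ⟨-, -, h⟩
      have hx : Q.getLast?.getD q ∈ (q :: Q).getLast? := by simp [List.getLast?_cons]
      exact (hQ _ hx).not_ge (h _ hx r rfl)
    rw [List.cons_append, vstar_cons_of_not_isChain hnot,
      ih fun x hx => hQ x (List.mem_getLast?_cons hx), List.cons_append]

theorem exists_eq_append_cons_isChain (l : List α) (hl : l ≠ []) :
    ∃ Q r R, l = Q ++ r :: R ∧ List.IsChain (· ≤ ·) (r :: R) ∧ ∀ x ∈ Q.getLast?, r < x := by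
  induction l with
  | nil => contradiction
  | cons a t ih =>
    by_cases hc : List.IsChain (· ≤ ·) (a :: t)
    · exact ⟨[], a, t, rfl, hc, by simp⟩
    have ht : t ≠ [] := by
      rintro rfl
      exact hc (List.isChain_singleton a)
    obtain ⟨Q, r, R, rfl, hR, hQ⟩ := ih ht
    refine ⟨a :: Q, r, R, rfl, hR, fun x hx => ?_⟩
    rw [List.getLast?_cons, Option.mem_some_iff] at hx
    cases hq : Q.getLast? with
    | some q => simp_all
    | none =>
      rw [List.getLast?_eq_none_iff] at hq
      subst hq
      simp only [List.getLast?_nil, Option.getD_none] at hx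
      exact hx ▸ lt_of_not_isChain_cons_cons hc hR

theorem vstar_append_eq_append_vstar {P A : List α} (hA : A ≠ [])
    (h : ¬ List.IsChain (· ≤ ·) A ∨ ∀ x ∈ P.getLast?, ∀ a ∈ A.head?, a < x) :
    vstar (P ++ A) = P ++ vstar A := by
  obtain ⟨Q, r, R, rfl, hR, hQ⟩ := exists_eq_append_cons_isChain A hA
  rw [vstar_append_cons hR hQ, ← List.append_assoc, vstar_append_cons hR, List.append_assoc]
  intro x hx
  cases hq : Q.getLast? with
  | some q => simp_all [List.getLast?_append]
  | none =>
    rw [List.getLast?_eq_none_iff] at hq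
    subst hq
    simp only [List.nil_append, List.append_nil] at h hx
    exact (h.resolve_left (not_not.mpr hR)) x hx r rfl

theorem vstar_append_eq_vstar_append {P A : List α}
    (h : A = [] ∨ List.IsChain (· ≤ ·) A ∧ ∃ x ∈ P.getLast?, ∃ a ∈ A.head?, x ≤ a) :
    vstar (P ++ A) = vstar P ++ A := by
  rcases h with rfl | ⟨hA, x, hx, a, ha, hxa⟩
  · simp
  obtain ⟨Q, r, R, rfl, hR, hQ⟩ :=
    exists_eq_append_cons_isChain P (by rintro rfl; simp at hx)
  have hRA : List.IsChain (· ≤ ·) (r :: (R ++ A)) := by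
    rw [← List.cons_append, List.isChain_append]
    refine ⟨hR, hA, fun y hy z hz => ?_⟩
    simp_all [List.getLast?_append]
  rw [vstar_append_cons hR hQ, List.append_assoc, List.cons_append, vstar_append_cons hRA hQ,
    List.append_assoc]

theorem exists_mem_getLast?_le_of_mem_getLast?_vstar {P : List α} {y : α}
    (hy : y ∈ (vstar P).getLast?) : ∃ x ∈ P.getLast?, x ≤ y := by
  obtain ⟨Q, r, R, rfl, hR, hQ⟩ :=
    exists_eq_append_cons_isChain P (by rintro rfl; simp [vstar] at hy)
  rw [vstar_append_cons hR hQ] at hy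
  rcases R.eq_nil_or_concat with rfl | ⟨R, z, rfl⟩
  · exact ⟨r, by simp, (hQ y (by simpa using hy)).le⟩
  · refine ⟨y, ?_, le_rfl⟩
    simp_all [List.getLast?_append, List.getLast?_cons]

theorem vstar_iterate_cons {a : α} {t : List α} {k : ℕ}
    (h : ∀ i < k, ¬ List.IsChain (· ≤ ·) (vstar^[i] (a :: t))) :
    vstar^[k] (a :: t) = a :: vstar^[k] t := by
  induction k with
  | zero => rfl
  | succ k ih =>
    have hk := ih fun i hi => h i (by omega)
    rw [Function.iterate_succ_apply', Function.iterate_succ_apply', hk,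
      vstar_cons_of_not_isChain (hk ▸ h k (by omega))]

theorem vstar_iterate_succ_cons {a : α} {t : List α} {j k : ℕ}
    (hj : List.IsChain (· ≤ ·) (vstar^[j] (a :: t))) (hjk : j ≤ k) :
    vstar^[k + 1] (a :: t) = vstar^[k] t := by
  classical
  have hex : ∃ i, List.IsChain (· ≤ ·) (vstar^[i] (a :: t)) := ⟨j, hj⟩
  set i := Nat.find hex
  have hcons : vstar^[i] (a :: t) = a :: vstar^[i] t :=
    vstar_iterate_cons fun _ => Nat.find_min hex
  have hchain : List.IsChain (· ≤ ·) (a :: vstar^[i] t) := hcons ▸ Nat.find_spec hex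
  have hchain' : List.IsChain (· ≤ ·) (vstar^[i] t) := hchain.tail
  obtain ⟨d, rfl⟩ : ∃ d, k = d + i := ⟨k - i, by have := Nat.find_min' hex hj; omega⟩
  rw [show d + i + 1 = d + 1 + i by omega, Function.iterate_add_apply, hcons,
    vstar_iterate_of_isChain hchain, List.drop_succ_cons, Function.iterate_add_apply,
    vstar_iterate_of_isChain hchain']

theorem vstar_iterate_of_eq_drop {z : List α} {m : ℕ} (hm : m < z.length)
    (h : vstar^[m + 1] z = z.drop (m + 1)) :
    ∃ b, vstar^[m] z = b :: z.drop (m + 1) ∧ List.IsChain (· ≤ ·) (vstar^[m] z) ∧ z[m] ≤ b := by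
  induction z generalizing m with
  | nil => simp at hm
  | cons a t ih =>
    simp only [List.drop_succ_cons, List.length_cons] at h hm ⊢
    by_cases hearly : ∃ i < m, List.IsChain (· ≤ ·) (vstar^[i] (a :: t))
    · obtain ⟨i, him, hi⟩ := hearly
      obtain ⟨n, rfl⟩ : ∃ n, m = n + 1 := ⟨m - 1, by omega⟩
      rw [vstar_iterate_succ_cons hi (by omega : i ≤ n + 1)] at h
      rw [vstar_iterate_succ_cons hi (by omega : i ≤ n)]
      exact ih (by omega) h
    push Not at hearly
    have hcons : vstar^[m] (a :: t) = a :: vstar^[m] t := vstar_iterate_cons hearly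
    by_cases hc : List.IsChain (· ≤ ·) (vstar^[m] (a :: t))
    · rw [vstar_iterate_succ_cons hc le_rfl] at h
      refine ⟨a, by rw [hcons, h], hc, ?_⟩
      cases m with
      | zero => exact le_rfl
      | succ n =>
        obtain ⟨b, hb, hbc, hnb⟩ := ih (by omega) h
        have hnot : ¬ List.IsChain (· ≤ ·) (a :: vstar^[n] t) := by
          rw [← vstar_iterate_cons fun i hi => hearly i (by omega)]
          exact hearly n (by omega)
        rw [hb] at hnot hbc
        exact hnb.trans (lt_of_not_isChain_cons_cons hnot hbc).le
    · rw [vstar_iterate_cons (k := m + 1) fun i hi => if him : i < m then hearly i him else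
        (show i = m by omega) ▸ hc] at h
      have hmt : m < t.length := by
        have := congrArg List.length h
        simp only [List.length_cons, List.length_drop] at this
        omega
      rw [List.drop_eq_getElem_cons hmt, List.cons.injEq] at h
      obtain ⟨b, hb, hbc, hmb⟩ := ih hmt h.2
      rw [hb] at hbc
      rw [hcons, hb] at hc
      exact absurd (hbc.cons_cons (h.1 ▸ hmb)) hc

/-- The shape `P ++ u^{c*}` of the strings on the star path of `w ++ u`: the boundary condition
makes the deletion turning `u^{(c-1)*}` into `u^{c*}` also the one star performs on
`P ++ u^{(c-1)*}`. -/
def IsStarSplit (u P : List α) (c : ℕ) : Prop :=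
  c ≤ u.length ∧ (1 ≤ c → List.IsChain (· ≤ ·) (vstar^[c - 1] u) →
    ∀ x ∈ P.getLast?, ∀ a ∈ (vstar^[c - 1] u).head?, a < x)

theorem IsStarSplit.vstar_eq {u P : List α} {c : ℕ} (hs : IsStarSplit u P c) :
    (vstar (P ++ vstar^[c] u) = P ++ vstar^[c + 1] u ∧ IsStarSplit u P (c + 1)) ∨
      (vstar (P ++ vstar^[c] u) = vstar P ++ vstar^[c] u ∧ IsStarSplit u (vstar P) c) := by
  rw [Function.iterate_succ_apply']
  by_cases hZ : vstar^[c] u ≠ [] ∧ (¬ List.IsChain (· ≤ ·) (vstar^[c] u) ∨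
      ∀ x ∈ P.getLast?, ∀ a ∈ (vstar^[c] u).head?, a < x)
  · refine .inl ⟨vstar_append_eq_append_vstar hZ.1 hZ.2, ?_, fun _ hch => ?_⟩
    · have := List.length_pos_iff.mpr hZ.1
      rw [length_vstar_iterate] at this
      omega
    · exact hZ.2.resolve_left (not_not.mpr hch)
  · refine .inr ⟨vstar_append_eq_vstar_append ?_, hs.1, fun hc hch y hy a ha => ?_⟩
    · rw [or_iff_not_imp_left]
      intro hA
      simpa [hA] using hZ
    · obtain ⟨x, hx, hxy⟩ := exists_mem_getLast?_le_of_mem_getLast?_vstar hy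
      exact (hs.2 hc hch x hx a ha).trans_le hxy

theorem exists_vstar_iterate_append_eq (w u : List α) (l : ℕ) :
    ∃ P c, vstar^[l] (w ++ u) = P ++ vstar^[c] u ∧ IsStarSplit u P c := by
  induction l with
  | zero => exact ⟨w, 0, rfl, Nat.zero_le _, by simp⟩
  | succ l ih =>
    obtain ⟨P, c, h, hs⟩ := ih
    rw [Function.iterate_succ_apply', h]
    rcases hs.vstar_eq with ⟨h', hs'⟩ | ⟨h', hs'⟩
    · exact ⟨P, c + 1, h', hs'⟩
    · exact ⟨vstar P, c, h', hs'⟩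

theorem vstar_iterate_ne_append {u P : List α} {c : ℕ} (hP : P ≠ []) (hs : IsStarSplit u P c)
    (k : ℕ) : vstar^[k] u ≠ P ++ vstar^[c] u := by
  intro h
  obtain ⟨m, hm⟩ : ∃ m, P.length = m + 1 :=
    Nat.exists_eq_succ_of_ne_zero (List.length_pos_iff.mpr hP).ne'
  have hlen := congrArg List.length h
  simp only [length_vstar_iterate, List.length_append] at hlen
  have hc : c = m + 1 + k := by have := hs.1; omega
  have hdrop : vstar^[m + 1] (vstar^[k] u) = (vstar^[k] u).drop (m + 1) := by
    rw [← Function.iterate_add_apply, ← hc, ← hm, h, List.drop_left]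
  obtain ⟨b, hb, hbc, hmb⟩ :=
    vstar_iterate_of_eq_drop (by rw [length_vstar_iterate]; omega) hdrop
  have hlast : (vstar^[k] u)[m]'(by rw [length_vstar_iterate]; omega) ∈ P.getLast? := by
    rw [List.getLast?_eq_getElem?, hm, Nat.add_sub_cancel,
      ← List.getElem?_append_left (l₂ := vstar^[c] u) (by omega), ← h]
    exact List.getElem?_eq_getElem _
  have hcm : vstar^[m] (vstar^[k] u) = vstar^[c - 1] u := by
    rw [← Function.iterate_add_apply]
    congr 1
    omega
  rw [hcm] at hb hbc
  have := hs.2 (by omega) hbc _ hlast b (by simp [hb])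
  exact this.not_ge hmb

theorem exists_lt_at_last_diff {S : List α} (hS : S ≠ []) {b : α}
    (hb : List.IsChain (· ≤ ·) S → ∀ a ∈ S.head?, a < b) :
    ∃ j < S.length, (∀ j', j < j' → S[j']? = (b :: vstar S)[j']?) ∧
      ∃ a b', S[j]? = some a ∧ (b :: vstar S)[j]? = some b' ∧ a < b' := by
  obtain ⟨Q, r, R, rfl, hR, hQ⟩ := exists_eq_append_cons_isChain S hS
  rw [vstar_append_cons hR hQ]
  refine ⟨Q.length, by simp, fun j' hj' => ?_, ?_⟩
  · obtain ⟨i, rfl⟩ : ∃ i, j' = Q.length + 1 + i := ⟨j' - Q.length - 1, by omega⟩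
    rw [← List.cons_append, List.getElem?_append_right (by omega),
      List.getElem?_append_right (by simp), List.length_cons,
      show Q.length + 1 + i - Q.length = i + 1 by omega,
      show Q.length + 1 + i - (Q.length + 1) = i by omega]
    rfl
  · rcases Q.eq_nil_or_concat with rfl | ⟨Q, q, rfl⟩
    · exact ⟨r, b, rfl, rfl, hb hR r rfl⟩
    · refine ⟨r, q, by simp, ?_, hQ q (by simp)⟩
      rw [← List.cons_append, List.getElem?_append_left (by simp)]
      simp

theorem exists_vstar_iterate_eq_cons {w u : List α} {l : ℕ}
    (hnot : ∀ c, vstar^[l] (w ++ u) ≠ vstar^[c] u)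
    (hmeet : ∃ c, vstar^[l + 1] (w ++ u) = vstar^[c] u) :
    ∃ b c, vstar^[l] (w ++ u) = b :: vstar^[c] u ∧ vstar^[l + 1] (w ++ u) = vstar^[c] u ∧
      IsStarSplit u [b] c := by
  obtain ⟨c₀, hc₀⟩ := hmeet
  obtain ⟨P, c, hPc, hs⟩ := exists_vstar_iterate_append_eq w u l
  have hP : P ≠ [] := by
    rintro rfl
    exact hnot c hPc
  rw [Function.iterate_succ_apply', hPc] at hc₀
  rcases hs.vstar_eq with ⟨hZ, hsZ⟩ | ⟨hW, hsW⟩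
  · exact absurd (hc₀.symm.trans hZ) (vstar_iterate_ne_append hP hsZ c₀)
  have hPnil : vstar P = [] := by
    by_contra h
    exact vstar_iterate_ne_append h hsW c₀ (hc₀.symm.trans hW)
  obtain ⟨b, rfl⟩ : ∃ b, P = [b] := by
    have := length_vstar P
    rw [hPnil, List.length_nil] at this
    exact List.length_eq_one_iff.mp (by have := List.length_pos_iff.mpr hP; omega)
  refine ⟨b, c, hPc, ?_, hs⟩
  rw [Function.iterate_succ_apply', hPc, hW, hPnil, List.nil_append]

theorem le_of_vstar_iterate_eq {u y : List α} {l c s' t' : ℕ} (hc : c ≤ u.length)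
    (hfirst : ∀ l', (∃ c', vstar^[l'] y = vstar^[c'] u) → l + 1 ≤ l')
    (hmeet : vstar^[l + 1] y = vstar^[c] u) (h : vstar^[s' + 1] u = vstar^[t' + 1] y) :
    c ≤ s' + 1 ∧ l ≤ t' := by
  have hlt := hfirst (t' + 1) ⟨s' + 1, h.symm⟩
  have hfrom : vstar^[t' + 1] y = vstar^[t' - l + c] u := by
    rw [show t' + 1 = t' - l + (l + 1) by omega, Function.iterate_add_apply, hmeet,
      ← Function.iterate_add_apply]
  have hlen := congrArg List.length (h.trans hfrom)
  rw [length_vstar_iterate, length_vstar_iterate] at hlen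
  omega

theorem vless_append_left {u w : List α} (hw : w ≠ []) : VLess u (w ++ u) := by
  have hlen : u.length < (w ++ u).length := by simp [List.length_pos_iff.mpr hw]
  by_cases hpath : ∃ k, vstar^[k] (w ++ u) = u
  · obtain ⟨k, hk⟩ := hpath
    refine .inl ⟨k, Nat.pos_of_ne_zero ?_, hk⟩
    rintro rfl
    exact hlen.ne (congrArg List.length hk).symm
  refine .inr ⟨hpath, fun ⟨k, hk⟩ => ?_, ?_⟩
  · have := congrArg List.length hk
    rw [length_vstar_iterate] at this
    omega
  classical
  have hmeet : ∃ l c, vstar^[l] (w ++ u) = vstar^[c] u :=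
    ⟨(w ++ u).length, u.length, by rw [vstar_iterate_length, vstar_iterate_length]⟩
  -- the star paths of `w ++ u` and `u` first meet at time `l + 1`
  obtain ⟨l, hl⟩ : ∃ l, Nat.find hmeet = l + 1 := by
    refine Nat.exists_eq_succ_of_ne_zero fun h0 => ?_
    obtain ⟨c, hc⟩ := h0 ▸ Nat.find_spec hmeet
    have := congrArg List.length hc
    rw [Function.iterate_zero_apply, length_vstar_iterate] at this
    omega
  have hfirst : ∀ l', (∃ c', vstar^[l'] (w ++ u) = vstar^[c'] u) → l + 1 ≤ l' :=
    fun l' h => hl ▸ Nat.find_min' hmeet h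
  obtain ⟨b, c, hprev, hnext, hs⟩ := exists_vstar_iterate_eq_cons
    (fun c h => absurd (hfirst l ⟨c, h⟩) (by omega)) (hl ▸ Nat.find_spec hmeet)
  obtain ⟨s, rfl⟩ : ∃ s, c = s + 1 :=
    Nat.exists_eq_succ_of_ne_zero fun h0 => hpath ⟨l + 1, by rw [hnext, h0]; rfl⟩
  refine ⟨s, l, hnext.symm, fun s' t' h' => ?_, ?_⟩
  · have := le_of_vstar_iterate_eq hs.1 hfirst hnext h'
    omega
  · rw [hprev, Function.iterate_succ_apply']
    refine exists_lt_at_last_diff ?_ fun hch a ha => hs.2 (by omega) hch b rfl a ha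
    rw [← List.length_pos_iff, length_vstar_iterate]
    have := hs.1
    omega

/-- The suffixes of any string are totally V-ordered by increasing length:
for `1 ≤ i < j ≤ n`, the suffix `x[j..n]` precedes the suffix `x[i..n]`
in V-order; in particular `x[n] ≺ x[n-1..n] ≺ ⋯ ≺ x`. -/
theorem vless_suffixes_ordered {α : Type*} [LinearOrder α]
    (x : List α) (i j : ℕ) (hi : 1 ≤ i) (hij : i < j) (hj : j ≤ x.length) :
    VLess (x.drop (j - 1)) (x.drop (i - 1)) := by
  have hsplit : (x.drop (i - 1)).take (j - i) ++ x.drop (j - 1) = x.drop (i - 1) := by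
    conv_rhs => rw [← List.take_append_drop (j - i) (x.drop (i - 1))]
    rw [List.drop_drop]
    congr 2
    omega
  rw [← hsplit]
  exact vless_append_left (by simp; omega)
end

section
/- Every nonempty word w over a linearly ordered alphabet can be written uniquely as a product w = u₁u₂⋯u_k of Lyndon words satisfying u₁ ≥ u₂ ≥ ⋯ ≥ u_k in lexicographic order (the Chen–Fox–Lyndon factorization). -/
/-!
Existence: split off the longest Lyndon prefix `p` of `w` and factor the rest. The first factor `q`
of the rest satisfies `q ≤ p`, for otherwise `p ++ q` would be a longer Lyndon prefix, since the
concatenation of Lyndon words `u < v` is again a Lyndon word. Uniqueness: in every factorization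
the first factor is the longest Lyndon prefix of `w`, so it is determined by `w`, and induction
on the number of factors finishes the proof.
-/

/-- A Lyndon word: a nonempty word that is strictly smaller, in lexicographic
order, than each of its proper nonempty suffixes (equivalently, a nonempty
primitive word strictly smaller than every other cyclic rotation of itself). -/
def IsLyndon {α : Type*} [LinearOrder α] (w : List α) : Prop :=
  w ≠ [] ∧ ∀ s : List α, s <:+ w → s ≠ [] → s ≠ w → List.Lex (· < ·) w s

namespace List

variable {α : Type*}

theorem IsSuffix.suffix_or_eq_append_of_append {s a b : List α} (h : s <:+ a ++ b) :
    s <:+ b ∨ ∃ s', s' <:+ a ∧ s = s' ++ b := by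
  rcases suffix_or_suffix_of_suffix h (suffix_append a b) with hsb | ⟨s', rfl⟩
  · exact .inl hsb
  · exact .inr ⟨s', suffix_append_self_iff.1 h, rfl⟩

theorem exists_suffix_prefix_of_prefix_flatten {p : List α} (hp : p ≠ []) :
    ∀ {gs : List (List α)}, p <+: gs.flatten → ∃ s, s ≠ [] ∧ s <:+ p ∧ ∃ g ∈ gs, s <+: g
  | [], h => absurd (prefix_nil.1 h) hp
  | g :: gs, h => by
    rw [flatten_cons] at h
    rcases prefix_or_prefix_of_prefix h (prefix_append g gs.flatten) with hpg | ⟨t, rfl⟩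
    · exact ⟨p, hp, suffix_refl p, g, mem_cons_self, hpg⟩
    · rcases eq_or_ne t [] with rfl | ht
      · exact ⟨_, hp, suffix_refl _, g, mem_cons_self, by simp⟩
      · obtain ⟨s, hs, hst, g', hg', hsg'⟩ :=
          exists_suffix_prefix_of_prefix_flatten ht (prefix_append_right_inj g |>.1 h)
        exact ⟨s, hs, hst.trans (suffix_append g t), g', mem_cons_of_mem g hg', hsg'⟩

variable [LinearOrder α]

theorem IsPrefix.lt_of_ne {p q : List α} (h : p <+: q) (hne : p ≠ q) : p < q :=
  lt_of_le_of_ne (not_lt.1 h.le) hne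

theorem append_lt_append_of_lt_of_not_prefix :
    ∀ {a b : List α}, a < b → ¬ a <+: b → ∀ u v, a ++ u < b ++ v
  | _, _, .nil, hab, _, _ => absurd nil_prefix hab
  | _, _, .cons h, hab, u, v =>
      .cons (append_lt_append_of_lt_of_not_prefix h (hab <| cons_prefix_cons.2 ⟨rfl, ·⟩) u v)
  | _, _, .rel h, _, _, _ => .rel h

end List

section Lyndon

open List

variable {α : Type*} [LinearOrder α]

theorem IsLyndon.lt_of_suffix {w s : List α} (hw : IsLyndon w) (hs : s <:+ w) (hne : s ≠ [])
    (hsw : s ≠ w) : w < s :=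
  hw.2 s hs hne hsw

theorem IsLyndon.le_of_suffix {w s : List α} (hw : IsLyndon w) (hs : s <:+ w) (hne : s ≠ []) :
    w ≤ s := by
  rcases eq_or_ne s w with rfl | hsw
  · exact le_rfl
  · exact (hw.lt_of_suffix hs hne hsw).le

theorem isLyndon_singleton (a : α) : IsLyndon [a] := by
  refine ⟨cons_ne_nil a [], fun s hs hne hsa => ?_⟩
  rcases suffix_cons_iff.1 hs with rfl | hs
  · exact absurd rfl hsa
  · exact absurd (suffix_nil.1 hs) hne

theorem IsLyndon.append_lt {a b : List α} (ha : IsLyndon a) (hb : IsLyndon b) (hab : a < b) :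
    a ++ b < b := by
  by_cases hpre : a <+: b
  · obtain ⟨c, rfl⟩ := hpre
    have hc : c ≠ [] := by rintro rfl; simp at hab
    have hca : c ≠ a ++ c := by simpa using ha.1.symm
    simpa using append_left_lt (l₁ := a) (hb.lt_of_suffix (suffix_append a c) hc hca)
  · simpa using append_lt_append_of_lt_of_not_prefix hab hpre b []

/-- Proper suffixes of `a ++ b` either lie in `b` or are `s' ++ b` with `a < s'` and `a` not a
prefix of the shorter word `s'`. -/
theorem IsLyndon.append {a b : List α} (ha : IsLyndon a) (hb : IsLyndon b) (hab : a < b) :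
    IsLyndon (a ++ b) := by
  have hlt : a ++ b < b := ha.append_lt hb hab
  refine ⟨by simp [ha.1], fun s hs hne hsab => ?_⟩
  rcases hs.suffix_or_eq_append_of_append with hsb | ⟨s', hs', rfl⟩
  · exact hlt.trans_le (hb.le_of_suffix hsb hne)
  · rcases eq_or_ne s' [] with rfl | hs'ne
    · exact hlt
    · have hs'a : s' ≠ a := by rintro rfl; exact hsab rfl
      have hlen : s'.length < a.length := lt_of_le_of_ne hs'.length_le (mt hs'.eq_of_length hs'a)
      exact append_lt_append_of_lt_of_not_prefix (ha.lt_of_suffix hs' hs'ne hs'a)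
        (fun h => hlen.not_ge h.length_le) b b

def IsLyndonFactorization (w : List α) (fs : List (List α)) : Prop :=
  fs.flatten = w ∧ (∀ f ∈ fs, IsLyndon f) ∧ fs.IsChain (· ≥ ·)

namespace IsLyndonFactorization

variable {w : List α} {fs : List (List α)}

theorem eq_nil (h : IsLyndonFactorization [] fs) : fs = [] :=
  eq_nil_iff_forall_not_mem.2 fun f hf => (h.2.1 f hf).1 (flatten_eq_nil_iff.1 h.1 f hf)

theorem head_prefix {u : List α} {us : List (List α)} (h : IsLyndonFactorization w (u :: us)) :
    u <+: w :=
  h.1 ▸ prefix_append u us.flatten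

theorem tail {u : List α} {us : List (List α)} (h : IsLyndonFactorization w (u :: us)) :
    IsLyndonFactorization us.flatten us :=
  ⟨rfl, fun f hf => h.2.1 f (mem_cons_of_mem u hf), h.2.2.tail⟩

theorem le_head {u : List α} {us : List (List α)} (h : IsLyndonFactorization w (u :: us)) :
    ∀ g ∈ u :: us, g ≤ u := by
  refine forall_mem_cons.2 ⟨le_rfl, fun g hg => ?_⟩
  exact rel_of_pairwise_cons (isChain_iff_pairwise.1 h.2.2) hg

theorem cons {p r : List α} (h : IsLyndonFactorization r fs) (hp : IsLyndon p)
    (hle : ∀ q ∈ fs.head?, q ≤ p) : IsLyndonFactorization (p ++ r) (p :: fs) :=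
  ⟨by rw [flatten_cons, h.1], forall_mem_cons.2 ⟨hp, h.2.1⟩, h.2.2.cons hle⟩

/-- The first factor is the longest Lyndon prefix: a longer one would have a nonempty suffix
that is a prefix of some factor, hence at most the first factor, which is smaller than it. -/
theorem length_le_head {u : List α} {us : List (List α)} (h : IsLyndonFactorization w (u :: us))
    {p : List α} (hp : IsLyndon p) (hpw : p <+: w) : p.length ≤ u.length := by
  by_contra! hlen
  have huw : u <+: w := h.head_prefix
  have hup : u < p := (prefix_of_prefix_length_le huw hpw hlen.le).lt_of_ne
    (by rintro rfl; exact lt_irrefl _ hlen)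
  obtain ⟨s, hs, hsp, g, hg, hsg⟩ := exists_suffix_prefix_of_prefix_flatten hp.1 (h.1 ▸ hpw)
  exact (hup.trans_le ((hp.le_of_suffix hsp hs).trans ((not_lt.1 hsg.le).trans
    (h.le_head g hg)))).false

theorem head_eq {u v : List α} {us vs : List (List α)} (hu : IsLyndonFactorization w (u :: us))
    (hv : IsLyndonFactorization w (v :: vs)) : u = v := by
  have huw := hu.head_prefix
  have hvw := hv.head_prefix
  have hle := hv.length_le_head (hu.2.1 u mem_cons_self) huw
  exact (prefix_of_prefix_length_le huw hvw hle).eq_of_length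
    (hle.antisymm (hu.length_le_head (hv.2.1 v mem_cons_self) hvw))

theorem unique {gs : List (List α)} (hfs : IsLyndonFactorization w fs)
    (hgs : IsLyndonFactorization w gs) : fs = gs := by
  induction fs generalizing w gs with
  | nil => rw [← hfs.1] at hgs; exact hgs.eq_nil.symm
  | cons u us ih =>
    cases gs with
    | nil => exact absurd (hfs.1.trans hgs.1.symm) (by simp [(hfs.2.1 u mem_cons_self).1])
    | cons v vs =>
      obtain rfl := hfs.head_eq hgs
      have htail : us.flatten = vs.flatten :=
        append_cancel_left ((flatten_cons ▸ hfs.1).trans (flatten_cons ▸ hgs.1).symm)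
      rw [ih hfs.tail (htail ▸ hgs.tail)]

end IsLyndonFactorization

theorem exists_longest_isLyndon_prefix {w : List α} (hw : w ≠ []) :
    ∃ p, IsLyndon p ∧ p <+: w ∧ ∀ q, IsLyndon q → q <+: w → q.length ≤ p.length := by
  classical
  obtain ⟨a, w', rfl⟩ := exists_cons_of_ne_nil hw
  obtain ⟨p, hp, hmax⟩ := Finset.exists_max_image ((a :: w').inits.toFinset.filter IsLyndon)
    length ⟨[a], by simp [isLyndon_singleton]⟩
  simp only [Finset.mem_filter, mem_toFinset, mem_inits] at hp hmax
  exact ⟨p, hp.2, hp.1, fun q hq hqw => hmax q ⟨hqw, hq⟩⟩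

theorem exists_isLyndonFactorization (w : List α) : ∃ fs, IsLyndonFactorization w fs := by
  rcases eq_or_ne w [] with rfl | hw
  · exact ⟨[], rfl, by simp, isChain_nil⟩
  obtain ⟨p, hp, ⟨r, rfl⟩, hmax⟩ := exists_longest_isLyndon_prefix hw
  obtain ⟨fs, hfs⟩ := exists_isLyndonFactorization r
  refine ⟨p :: fs, hfs.cons hp fun q hq => not_lt.1 fun hpq => ?_⟩
  obtain ⟨qs, rfl⟩ := head?_eq_some_iff.1 hq
  have hq := hfs.2.1 q mem_cons_self
  have hlen := hmax (p ++ q) (hp.append hq hpq) ((prefix_append_right_inj p).2 hfs.head_prefix)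
  simp [hq.1] at hlen
termination_by w.length
decreasing_by subst_vars; simp [length_pos_iff.2 hp.1]

end Lyndon

theorem chen_fox_lyndon_factorization_general {α : Type*} [LinearOrder α]
    (w : List α) :
    ∃! fs : List (List α),
      fs.flatten = w ∧
      (∀ f ∈ fs, IsLyndon f) ∧
      fs.Chain' (fun a b => ¬ List.Lex (· < ·) a b) := by
  simp only [List.lex_lt, not_lt]
  obtain ⟨fs, hfs⟩ := exists_isLyndonFactorization w
  exact ⟨fs, hfs, fun gs hgs => IsLyndonFactorization.unique hgs hfs⟩

/-- Chen–Fox–Lyndon theorem: every nonempty word `w` over a linearly ordered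
alphabet can be written uniquely as a product `w = u₁u₂⋯u_k` of Lyndon words
with `u₁ ≥ u₂ ≥ ⋯ ≥ u_k` in lexicographic order. -/
theorem chen_fox_lyndon_factorization {α : Type*} [LinearOrder α]
    (w : List α) (hw : w ≠ []) :
    ∃! fs : List (List α),
      fs.flatten = w ∧
      (∀ f ∈ fs, IsLyndon f) ∧
      fs.Chain' (fun a b => ¬ List.Lex (· < ·) a b) :=
  chen_fox_lyndon_factorization_general w
end
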